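/- arXiv:1802.05245 — 2 statements merged into one kernel-verified Lean document; each statement's English description precedes it below -/
import Mathlib

section
/- Let V(r) = ξ/√r with ξ ≠ 0 and k > 0. Then with the tortoise coordinate r_* = r − (ξ/k²)√r − (ξ²/(8k⁴)) ln r, the function u(r) = exp(i k r_*) = exp(i(kr − (ξ/k)√r − (ξ²/(8k³)) ln r)) satisfies u''(r) + (k² − ξ/√r) u(r) = g(r) u(r) with g(r) = O(r^{−3/2}) as r → ∞. -/
open Real Complex Filter Asymptotics

open scoped Topology

/-! Writing `φ = k r_*`, the function `u = exp (i φ)` satisfies `u'' = (i φ'' - φ'²) u`, so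
`g = i φ'' - φ'² + k² - ξ / √r`. In the variable `t = 1 / √r`,
`φ' / k = 1 - ξ t / (2 k²) - ξ² t² / (8 k⁴)` is the second-order Taylor polynomial of
`√(1 - ξ t / k²)`, so `k² (1 - ξ t / k²) - φ'²` has no terms of order `t` or `t²`. As `φ''` is also
of order `t³`, `g` is a combination of `t³` and `t⁴`, hence `O(r^(-3/2))`. -/

theorem deriv_deriv_cexp_comp {𝕜 : Type*} [NontriviallyNormedField 𝕜] [NormedAlgebra 𝕜 ℂ]
    {f f' : 𝕜 → ℂ} {f'' : ℂ} {x : 𝕜} (hf : ∀ᶠ y in 𝓝 x, HasDerivAt f (f' y) y)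
    (hf' : HasDerivAt f' f'' x) :
    deriv (deriv fun y => exp (f y)) x = (f'' + f' x ^ 2) * exp (f x) := by
  have hderiv : deriv (fun y => exp (f y)) =ᶠ[𝓝 x] fun y => f' y * exp (f y) := by
    filter_upwards [hf] with y hy
    rw [hy.cexp.deriv, mul_comm]
  rw [hderiv.deriv_eq]
  refine (hf'.mul hf.self_of_nhds.cexp).deriv.trans ?_
  ring

theorem hasDerivAt_inv_sqrt {x : ℝ} (hx : 0 < x) :
    HasDerivAt (fun y => (√y)⁻¹) (-(√x)⁻¹ ^ 3 / 2) x := by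
  refine ((hasDerivAt_sqrt hx.ne').inv (sqrt_pos.2 hx).ne').congr_deriv ?_
  field_simp

theorem hasDerivAt_tortoise (a b : ℝ) {x : ℝ} (hx : 0 < x) :
    HasDerivAt (fun y => y - a * √y - b * Real.log y)
      (1 - a / 2 * (√x)⁻¹ - b * (√x)⁻¹ ^ 2) x := by
  refine (((hasDerivAt_id x).sub ((hasDerivAt_sqrt hx.ne').const_mul a)).sub
    ((hasDerivAt_log hx.ne').const_mul b)).congr_deriv ?_
  rw [inv_pow, sq_sqrt hx.le]
  ring

theorem hasDerivAt_deriv_tortoise (a b : ℝ) {x : ℝ} (hx : 0 < x) :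
    HasDerivAt (fun y => 1 - a / 2 * (√y)⁻¹ - b * (√y)⁻¹ ^ 2)
      (a / 4 * (√x)⁻¹ ^ 3 + b * (√x)⁻¹ ^ 4) x := by
  have h := hasDerivAt_inv_sqrt hx
  refine (((hasDerivAt_const x (1 : ℝ)).sub (h.const_mul (a / 2))).sub
    ((h.pow 2).const_mul b)).congr_deriv ?_
  ring

theorem tortoise_remainder_eq (ξ k t : ℂ) (hk : k ≠ 0) :
    I * k * (ξ / k ^ 2 / 4 * t ^ 3 + ξ ^ 2 / (8 * k ^ 4) * t ^ 4)
      + (I * k * (1 - ξ / k ^ 2 / 2 * t - ξ ^ 2 / (8 * k ^ 4) * t ^ 2)) ^ 2 + (k ^ 2 - ξ * t)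
      = (I * ξ / (4 * k) - ξ ^ 3 / (8 * k ^ 4)) * t ^ 3
        + (I * ξ ^ 2 / (8 * k ^ 3) - ξ ^ 4 / (64 * k ^ 6)) * t ^ 4 := by
  rw [mul_pow, mul_pow, I_sq]
  field_simp
  ring

theorem isBigO_inv_sqrt_pow {n : ℕ} (hn : 3 ≤ n) :
    (fun x : ℝ => (√x)⁻¹ ^ n) =O[atTop] fun x => x ^ (-(3 : ℝ) / 2) := by
  refine IsBigO.of_bound 1 ?_
  filter_upwards [eventually_ge_atTop 1] with x hx
  have hx0 : 0 < x := one_pos.trans_le hx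
  have ht : (√x)⁻¹ ≤ 1 := inv_le_one_of_one_le₀ (one_le_sqrt.2 hx)
  have hpow : (√x)⁻¹ ^ 3 = x ^ (-(3 : ℝ) / 2) := by
    rw [sqrt_eq_rpow, ← rpow_neg hx0.le, ← rpow_natCast, ← rpow_mul hx0.le]
    norm_num
  rw [one_mul, norm_of_nonneg (by positivity), norm_of_nonneg (by positivity), ← hpow]
  exact pow_le_pow_of_le_one (by positivity) ht hn

theorem inv_sqrt_potential_tortoise_general (ξ k : ℝ) (hk : 0 < k)
    (rstar : ℝ → ℝ)
    (hrstar : ∀ r, rstar r =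
      r - ξ / k ^ 2 * Real.sqrt r - ξ ^ 2 / (8 * k ^ 4) * Real.log r)
    (u : ℝ → ℂ) (hu : ∀ r, u r = Complex.exp (Complex.I * (k : ℂ) * (rstar r : ℂ))) :
    ∃ g : ℝ → ℂ,
      (∀ r : ℝ, 0 < r →
        deriv (deriv u) r + ((k : ℂ) ^ 2 - (ξ : ℂ) / (Real.sqrt r : ℂ)) * u r = g r * u r) ∧
      g =O[atTop] fun r : ℝ => r ^ (-(3 : ℝ) / 2) := by
  refine ⟨fun r => (I * ξ / (4 * k) - ξ ^ 3 / (8 * k ^ 4)) * (((√r)⁻¹ ^ 3 : ℝ) : ℂ)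
    + (I * ξ ^ 2 / (8 * k ^ 3) - ξ ^ 4 / (64 * k ^ 6)) * (((√r)⁻¹ ^ 4 : ℝ) : ℂ), ?_, ?_⟩
  · intro r hr
    have hphase : ∀ᶠ y in 𝓝 r, HasDerivAt (fun y => I * k * (rstar y : ℂ))
        (I * k * ((1 - ξ / k ^ 2 / 2 * (√y)⁻¹ - ξ ^ 2 / (8 * k ^ 4) * (√y)⁻¹ ^ 2 : ℝ) : ℂ)) y := by
      filter_upwards [lt_mem_nhds hr] with y hy
      rw [funext hrstar]
      exact (hasDerivAt_tortoise _ _ hy).ofReal_comp.const_mul _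
    rw [funext hu, deriv_deriv_cexp_comp hphase
      ((hasDerivAt_deriv_tortoise _ _ hr).ofReal_comp.const_mul _)]
    push_cast
    linear_combination exp (I * k * (rstar r : ℂ)) *
      tortoise_remainder_eq ξ k (√r : ℂ)⁻¹ (ofReal_ne_zero.2 hk.ne')
  · exact ((isBigO_ofReal_left.2 (isBigO_inv_sqrt_pow le_rfl)).const_mul_left _).add
      ((isBigO_ofReal_left.2 (isBigO_inv_sqrt_pow (by norm_num))).const_mul_left _)

theorem inv_sqrt_potential_tortoise (ξ k : ℝ) (hξ : ξ ≠ 0) (hk : 0 < k)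
    (rstar : ℝ → ℝ)
    (hrstar : ∀ r, rstar r =
      r - ξ / k ^ 2 * Real.sqrt r - ξ ^ 2 / (8 * k ^ 4) * Real.log r)
    (u : ℝ → ℂ) (hu : ∀ r, u r = Complex.exp (Complex.I * (k : ℂ) * (rstar r : ℂ))) :
    ∃ g : ℝ → ℂ,
      (∀ r : ℝ, 0 < r →
        deriv (deriv u) r + ((k : ℂ) ^ 2 - (ξ : ℂ) / (Real.sqrt r : ℂ)) * u r = g r * u r) ∧
      g =O[atTop] fun r : ℝ => r ^ (-(3 : ℝ) / 2) :=
  inv_sqrt_potential_tortoise_general ξ k hk rstar hrstar u hu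
end

section
/- Let V(r) = ζ r⁶ with ζ > 0 and k > 0. Then with r_* = (ζ^{1/2}/(4k)) r⁴ + (1/(4k)) ln(ζ r⁶), the function u(r) = exp(−k r_*) = exp(−(1/4)ζ^{1/2} r⁴ − (1/4) ln(ζ r⁶)) satisfies u''(r) − ζ r⁶ u(r) + k² u(r) = g(r) u(r) where g(r)/r⁶ → 0 as r → ∞ (in fact g(r) = O(r²)). -/
/-!
Writing `u = exp (-φ)` with `φ = k r_*`, one has `u'' = (φ' ^ 2 - φ'') u`. For
`φ = (√ζ / 4) r⁴ + (1 / 4) log (ζ r⁶)` the leading term of `φ' ^ 2` is exactly `ζ r⁶`, the cross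
term of `φ' ^ 2` cancels against `φ''`, and what remains is `u'' = (ζ r⁶ + 15 / (4 r²)) u`.
Hence `g = k² + 15 / (4 r²)`, which is bounded.
-/

open Real Filter Asymptotics Topology

theorem hasDerivAt_deriv_exp_neg {φ φ' : ℝ → ℝ} {φ'' r : ℝ}
    (hφ : ∀ᶠ x in 𝓝 r, HasDerivAt φ (φ' x) x) (hφ' : HasDerivAt φ' φ'' r) :
    HasDerivAt (deriv fun x => exp (-φ x)) ((φ' r ^ 2 - φ'') * exp (-φ r)) r := by
  have hderiv : deriv (fun x => exp (-φ x)) =ᶠ[𝓝 r] fun x => -φ' x * exp (-φ x) :=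
    hφ.mono fun x hx => by rw [hx.fun_neg.exp.deriv, mul_comm]
  have hexp : HasDerivAt (fun x => exp (-φ x)) (exp (-φ r) * -φ' r) r :=
    hφ.self_of_nhds.fun_neg.exp
  refine ((hφ'.fun_neg.mul hexp).congr_of_eventuallyEq hderiv).congr_deriv ?_
  ring

theorem tendsto_const_add_div_sq_atTop (c a : ℝ) :
    Tendsto (fun r : ℝ => c + a / r ^ 2) atTop (𝓝 c) := by
  simpa using tendsto_const_nhds.add
    (tendsto_const_nhds (x := a) |>.div_atTop (tendsto_pow_atTop two_ne_zero))

section TortoisePhase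

variable {ζ r : ℝ}

/-- `k r_*` for the potential `V = ζ r⁶`. -/
noncomputable def tortoisePhase (ζ r : ℝ) : ℝ :=
  √ζ / 4 * r ^ 4 + 1 / 4 * log (ζ * r ^ 6)

theorem hasDerivAt_tortoisePhase (hζ : ζ ≠ 0) (hr : r ≠ 0) :
    HasDerivAt (tortoisePhase ζ) (√ζ * r ^ 3 + 3 / (2 * r)) r := by
  have hlog := ((hasDerivAt_pow 6 r).const_mul ζ).log (by positivity)
  refine (((hasDerivAt_pow 4 r).const_mul (√ζ / 4)).add (hlog.const_mul (1 / 4))).congr_deriv ?_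
  field_simp
  ring

theorem hasDerivAt_tortoisePhase_deriv (hr : r ≠ 0) :
    HasDerivAt (fun x => √ζ * x ^ 3 + 3 / (2 * x)) (3 * √ζ * r ^ 2 - 3 / (2 * r ^ 2)) r := by
  have hinv := ((hasDerivAt_id' r).const_mul 2).inv (by simpa using hr)
  refine (((hasDerivAt_pow 3 r).const_mul √ζ).add (hinv.const_mul 3)).congr_deriv ?_
  field_simp
  ring

theorem deriv_deriv_exp_neg_tortoisePhase (hζ : 0 < ζ) (hr : r ≠ 0) :
    deriv (deriv fun x => exp (-tortoisePhase ζ x)) r =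
      (ζ * r ^ 6 + 15 / (4 * r ^ 2)) * exp (-tortoisePhase ζ r) := by
  have hφ : ∀ᶠ x in 𝓝 r, HasDerivAt (tortoisePhase ζ) (√ζ * x ^ 3 + 3 / (2 * x)) x :=
    (eventually_ne_nhds hr).mono fun x hx => hasDerivAt_tortoisePhase hζ.ne' hx
  rw [(hasDerivAt_deriv_exp_neg hφ (hasDerivAt_tortoisePhase_deriv hr)).deriv]
  field_simp
  linear_combination 16 * r ^ 8 * sq_sqrt hζ.le

end TortoisePhase

theorem r_six_potential_tortoise (ζ k : ℝ) (hζ : 0 < ζ) (hk : 0 < k)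
    (rstar : ℝ → ℝ)
    (hrstar : ∀ r, rstar r =
      Real.sqrt ζ / (4 * k) * r ^ 4 + 1 / (4 * k) * Real.log (ζ * r ^ 6))
    (u : ℝ → ℝ) (hu : ∀ r, u r = Real.exp (-(k * rstar r))) :
    ∃ g : ℝ → ℝ,
      (∀ r : ℝ, 0 < r →
        deriv (deriv u) r - ζ * r ^ 6 * u r + k ^ 2 * u r = g r * u r) ∧
      Tendsto (fun r => g r / r ^ 6) atTop (nhds 0) ∧
      g =O[atTop] fun r : ℝ => r ^ 2 := by
  have hu_eq : u = fun r => exp (-tortoisePhase ζ r) := by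
    funext r
    rw [hu, hrstar, tortoisePhase]
    field_simp
  have hg : Tendsto (fun r : ℝ => k ^ 2 + 15 / 4 / r ^ 2) atTop (𝓝 (k ^ 2)) :=
    tendsto_const_add_div_sq_atTop _ _
  refine ⟨fun r => k ^ 2 + 15 / 4 / r ^ 2, fun r hr => ?_, ?_, ?_⟩
  · rw [hu_eq, deriv_deriv_exp_neg_tortoisePhase hζ hr.ne']
    field_simp
    ring
  · simpa using hg.div_atTop (tendsto_pow_atTop (by norm_num : 6 ≠ 0))
  · simpa using (hg.isBigO_one ℝ).trans
      (isLittleO_pow_pow_atTop_of_lt (𝕜 := ℝ) (by norm_num : 0 < 2)).isBigO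
end
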